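/- Let G be a k-edge-connected graph with k ≥ 2m, and let S be a nonempty subset of V(G). Then Ω_m(G \ S) ≤ Σ_{v∈S} m(d_G(v) - 2m)/k + (2m/k)·Ω_m(G[S]). -/

import Mathlib

open SimpleGraph

def IsTreeConn {V : Type*} (m : ℕ) (G : SimpleGraph V) : Prop :=
  ∃ T : Fin m → SimpleGraph V, (∀ i, T i ≤ G) ∧ (∀ i, (T i).IsTree) ∧
    ∀ i j, i ≠ j → Disjoint (T i).edgeSet (T j).edgeSet

noncomputable def eIn {V : Type*} (G : SimpleGraph V) (S : Set V) : ℕ :=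
  {e ∈ G.edgeSet | ∀ v ∈ e, v ∈ S}.ncard

def IsSparse {V : Type*} (m : ℕ) (G : SimpleGraph V) : Prop :=
  ∀ S : Set V, S.Nonempty → (eIn G S : ℤ) ≤ m * S.ncard - m

def mComp {V : Type*} (m : ℕ) (G : SimpleGraph V) (v : V) : Set V :=
  ⋃₀ {X : Set V | v ∈ X ∧ IsTreeConn m (G.induce X)}

noncomputable def crossE {V : Type*} (m : ℕ) (G : SimpleGraph V) : ℕ :=
  {e ∈ G.edgeSet | ∃ u ∈ e, ∃ w ∈ e, mComp m G u ≠ mComp m G w}.ncard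

noncomputable def Omega {V : Type*} (m : ℕ) (G : SimpleGraph V) : ℤ :=
  m * (Set.range (mComp m G)).ncard - crossE m G

noncomputable def cutE {V : Type*} (G : SimpleGraph V) (S : Set V) : ℕ :=
  {e ∈ G.edgeSet | ∃ u ∈ e, ∃ w ∈ e, u ∈ S ∧ w ∉ S}.ncard

def EdgeConn {V : Type*} (k : ℕ) (G : SimpleGraph V) : Prop :=
  ∀ S : Set V, S.Nonempty → Sᶜ.Nonempty → k ≤ cutE G S

/-
Two m-tree-connected vertex sets sharing a vertex have an m-tree-connected union, so the
m-tree-connected components partition the vertex set. Let p and x be the number of parts and of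
crossing edges of this partition for G \ S. Each part is a nonempty vertex set whose complement
contains S, so k-edge-connectivity gives it at least k boundary edges in G; summing over the
parts counts each crossing edge twice and each edge between S and V \ S at most once, so
k p ≤ 2 x + e(S, V \ S). A part Q of the partition of G[S] carries m edge-disjoint spanning
trees, hence at least m (|Q| - 1) edges, and the other edges of G[S] are its crossing edges, so
m |S| - e(G[S]) ≤ Ω_m(G[S]). Since ∑_{v ∈ S} d_G(v) = 2 e(G[S]) + e(S, V \ S) and k ≥ 2m,
these combine to k Ω_m(G \ S) ≤ ∑_{v ∈ S} m (d_G(v) - 2m) + 2m Ω_m(G[S]).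
-/

open Function Finset

namespace SimpleGraph

variable {V W : Type*}

theorem Reachable.of_forall_adj {G : SimpleGraph V} {G' : SimpleGraph W} (f : V → W)
    (h : ∀ a b, G.Adj a b → G'.Reachable (f a) (f b)) {u v : V} (huv : G.Reachable u v) :
    G'.Reachable (f u) (f v) := by
  rw [reachable_iff_reflTransGen] at huv ⊢
  exact huv.lift' f fun a b hab => (reachable_iff_reflTransGen _ _).1 (h a b hab)

theorem disjoint_deleteEdges_of_support_subset {F G : SimpleGraph V} {X : Set V}
    (hF : F.support ⊆ X) : Disjoint F (G.deleteEdges {e | ∀ v ∈ e, v ∈ X}) :=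
  disjoint_left.2 fun _ _ h h' =>
    (deleteEdges_adj.1 h').2 (by simpa using ⟨hF h.left_mem_support, hF h.right_mem_support⟩)

section Fintype

open scoped Classical

variable [Fintype V] (G : SimpleGraph V)

theorem sum_ncard_neighborSet : ∑ v, (G.neighborSet v).ncard = 2 * G.edgeSet.ncard := by
  have hdeg (v : V) : (G.neighborSet v).ncard = G.degree v := by
    rw [← card_neighborSet_eq_degree, ← Nat.card_eq_fintype_card, Nat.card_coe_set_eq]
  rw [← coe_edgeFinset, Set.ncard_coe_finset, ← sum_degrees_eq_twice_card_edges]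
  simp_rw [hdeg]

theorem two_mul_ncard_edgeSet_induce (X : Set V) :
    2 * (G.induce X).edgeSet.ncard = ∑ v ∈ X.toFinset, (G.neighborSet v ∩ X).ncard := by
  rw [← sum_ncard_neighborSet, ← Finset.sum_set_coe]
  refine sum_congr rfl fun v _ => ?_
  rw [← Set.ncard_image_of_injective _ Subtype.val_injective]
  congr 1
  ext w
  simp [and_comm]

theorem sum_ncard_neighborSet_eq_induce_add (S : Finset V) :
    ∑ v ∈ S, (G.neighborSet v).ncard =
      2 * (G.induce S).edgeSet.ncard + ∑ v ∈ S, (G.neighborSet v \ S).ncard := by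
  rw [two_mul_ncard_edgeSet_induce, Finset.toFinset_coe, ← sum_add_distrib]
  exact sum_congr rfl fun v _ => (Set.ncard_inter_add_ncard_sdiff_eq_ncard _ _).symm

theorem sum_compl_ncard_neighborSet_inter (S : Finset V) :
    ∑ v ∈ Sᶜ, (G.neighborSet v ∩ S).ncard = ∑ v ∈ S, (G.neighborSet v \ S).ncard := by
  have hfilter (v : V) (T : Finset V) :
      (G.neighborSet v ∩ T).ncard = #{w ∈ T | G.Adj v w} := by
    rw [← Set.ncard_coe_finset]
    congr 1
    ext
    simp [and_comm]
  simp_rw [Set.sdiff_eq, ← coe_compl, hfilter]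
  simpa [bipartiteAbove, bipartiteBelow, adj_comm] using
    sum_card_bipartiteAbove_eq_sum_card_bipartiteBelow (s := Sᶜ) (t := S) G.Adj

end Fintype

end SimpleGraph

section TreeConnectivity

variable {V : Type*} {m : ℕ} {H : SimpleGraph V}

theorem isTreeConn_induce_iff {X : Set V} :
    IsTreeConn m (H.induce X) ↔ ∃ F : Fin m → SimpleGraph V, (∀ i, F i ≤ H) ∧
      (∀ i, (F i).support ⊆ X) ∧ (∀ i, ((F i).induce X).Connected) ∧
      Pairwise (Disjoint on F) := by
  constructor
  · rintro ⟨T, hTH, hT, hdisj⟩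
    refine ⟨fun i => (T i).spanningCoe, fun i => (map_le_iff_le_comap _ _ _).2 (hTH i),
      fun i => ?_, fun i => induce_spanningCoe ▸ (hT i).connected, fun i j hij => ?_⟩
    · rw [support_spanningCoe]
      exact Set.image_subset_iff.2 fun v _ => v.2
    · change Disjoint _ _
      rw [← disjoint_edgeSet, edgeSet_map, edgeSet_map,
        Set.disjoint_image_iff (Embedding.subtype _).sym2Map.injective]
      exact hdisj i j hij
  · rintro ⟨F, hFH, -, hF, hdisj⟩
    choose T hTF hT using fun i => (hF i).exists_isTree_le
    refine ⟨T, fun i => (hTF i).trans (comap_monotone _ (hFH i)), hT, fun i j hij => ?_⟩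
    rw [disjoint_edgeSet]
    refine Disjoint.mono (hTF i) (hTF j) (disjoint_left.2 fun a b h h' => ?_)
    exact disjoint_left.1 (hdisj hij) _ _ h h'

theorem isTreeConn_induce_singleton (v : V) : IsTreeConn m (H.induce {v}) :=
  ⟨fun _ => ⊥, fun _ => bot_le, fun _ => ⟨Connected.of_subsingleton, isAcyclic_bot⟩,
    fun _ _ _ => by simp⟩

theorem isTreeConn_induce_union {X Y : Set V} (hX : IsTreeConn m (H.induce X))
    (hY : IsTreeConn m (H.induce Y)) (hXY : (X ∩ Y).Nonempty) :
    IsTreeConn m (H.induce (X ∪ Y)) := by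
  obtain ⟨F, hFH, hFX, hF, hFdisj⟩ := isTreeConn_induce_iff.1 hX
  obtain ⟨F', hF'H, hF'Y, hF', hF'disj⟩ := isTreeConn_induce_iff.1 hY
  obtain ⟨v₀, hv₀X, hv₀Y⟩ := hXY
  -- An edge of `F' i` inside `X` may belong to some `F j`; it is dropped, and its endpoints
  -- stay connected through `F i`.
  let D : Fin m → SimpleGraph V := fun i => (F' i).deleteEdges {e | ∀ v ∈ e, v ∈ X}
  refine isTreeConn_induce_iff.2 ⟨fun i => F i ⊔ D i,
    fun i => sup_le (hFH i) ((deleteEdges_le _).trans (hF'H i)), fun i => ?_, fun i => ?_,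
    fun i j hij => ?_⟩
  · rintro v ⟨w, hvw | hvw⟩
    · exact .inl (hFX i ⟨w, hvw⟩)
    · exact .inr (hF'Y i ⟨w, (deleteEdges_adj.1 hvw).1⟩)
  · set G := (F i ⊔ D i).induce (X ∪ Y)
    have reachX (x : V) (hx : x ∈ X) : G.Reachable ⟨x, .inl hx⟩ ⟨v₀, .inl hv₀X⟩ :=
      ((hF i).preconnected ⟨x, hx⟩ ⟨v₀, hv₀X⟩).of_forall_adj
        (fun a : ↥X => (⟨a, .inl a.2⟩ : ↥(X ∪ Y)))
        fun _ _ hab => Adj.reachable (Or.inl hab)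
    have reachY (y : V) (hy : y ∈ Y) : G.Reachable ⟨y, .inr hy⟩ ⟨v₀, .inl hv₀X⟩ := by
      refine ((hF' i).preconnected ⟨y, hy⟩ ⟨v₀, hv₀Y⟩).of_forall_adj
        (fun a : ↥Y => (⟨a, .inr a.2⟩ : ↥(X ∪ Y))) fun a b hab => ?_
      by_cases hab' : (a : V) ∈ X ∧ (b : V) ∈ X
      · exact (reachX a hab'.1).trans (reachX b hab'.2).symm
      · exact Adj.reachable (Or.inr (deleteEdges_adj.2 ⟨hab, by simpa using hab'⟩))
    have reach (c : ↥(X ∪ Y)) : G.Reachable c ⟨v₀, .inl hv₀X⟩ :=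
      c.2.elim (reachX c) (reachY c)
    exact (connected_iff _).2
      ⟨fun a b => (reach a).trans (reach b).symm, ⟨⟨v₀, .inl hv₀X⟩⟩⟩
  · refine disjoint_sup_left.2 ⟨disjoint_sup_right.2 ⟨hFdisj hij, ?_⟩,
      disjoint_sup_right.2 ⟨?_, ?_⟩⟩
    · exact disjoint_deleteEdges_of_support_subset (hFX i)
    · exact (disjoint_deleteEdges_of_support_subset (hFX j)).symm
    · exact (hF'disj hij).mono (deleteEdges_le _) (deleteEdges_le _)

theorem IsTreeConn.mul_card_le_ncard_edgeSet_add [Finite V] {G : SimpleGraph V}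
    (h : IsTreeConn m G) : m * Nat.card V ≤ G.edgeSet.ncard + m := by
  classical
  have := Fintype.ofFinite V
  obtain ⟨T, hTG, hT, hdisj⟩ := h
  calc m * Nat.card V = ∑ i, (#(T i).edgeFinset + 1) := by
        simp [(hT _).card_edgeFinset, Nat.card_eq_fintype_card]
    _ = #(univ.biUnion fun i => (T i).edgeFinset) + m := by
        rw [sum_add_distrib, card_biUnion fun i _ j _ hij => by simpa using hdisj i j hij]
        simp
    _ ≤ G.edgeSet.ncard + m := by
        rw [Set.ncard_eq_toFinset_card']
        gcongr
        exact biUnion_subset.2 fun i _ => edgeFinset_mono (hTG i)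

end TreeConnectivity

section Components

variable {V : Type*} {m : ℕ} {H : SimpleGraph V}

theorem subset_mComp {v : V} {X : Set V} (hv : v ∈ X) (hX : IsTreeConn m (H.induce X)) :
    X ⊆ mComp m H v :=
  Set.subset_sUnion_of_mem (t := X) ⟨hv, hX⟩

theorem mem_mComp_self (v : V) : v ∈ mComp m H v :=
  subset_mComp (Set.mem_singleton v) (isTreeConn_induce_singleton v) (Set.mem_singleton v)

theorem isTreeConn_induce_mComp [Finite V] (v : V) :
    IsTreeConn m (H.induce (mComp m H v)) := by
  -- a maximal `m`-tree-connected set through `v` absorbs every other one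
  obtain ⟨X, hX⟩ :=
    (Set.toFinite {X : Set V | v ∈ X ∧ IsTreeConn m (H.induce X)}).exists_maximal
      ⟨{v}, Set.mem_singleton v, isTreeConn_induce_singleton v⟩
  suffices mComp m H v = X from this ▸ hX.prop.2
  refine (Set.sUnion_subset fun Y hY => ?_).antisymm (subset_mComp hX.prop.1 hX.prop.2)
  obtain ⟨hvY, hY⟩ := hY
  have hXY : v ∈ X ∪ Y ∧ IsTreeConn m (H.induce (X ∪ Y)) :=
    ⟨.inl hX.prop.1, isTreeConn_induce_union hX.prop.2 hY ⟨v, hX.prop.1, hvY⟩⟩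
  exact (Set.union_subset_iff.1 (hX.2 hXY Set.subset_union_left)).2

theorem mComp_eq_of_mem [Finite V] {v w : V} (h : w ∈ mComp m H v) :
    mComp m H w = mComp m H v := by
  have hvw : mComp m H v ⊆ mComp m H w := subset_mComp h (isTreeConn_induce_mComp v)
  exact (subset_mComp (hvw (mem_mComp_self v)) (isTreeConn_induce_mComp w)).antisymm hvw

theorem mComp_eq_mComp_iff [Finite V] {v w : V} :
    mComp m H w = mComp m H v ↔ w ∈ mComp m H v :=
  ⟨fun h => h ▸ mem_mComp_self w, mComp_eq_of_mem⟩

end Components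

section Counting

open scoped Classical

variable {V : Type*} [Fintype V] {m : ℕ}

theorem ncard_range_mComp (H : SimpleGraph V) :
    (Set.range (mComp m H)).ncard = #(univ.image (mComp m H)) := by
  rw [Set.ncard_eq_toFinset_card', Set.toFinset_range]

theorem sum_image_mComp_sum_toFinset (H : SimpleGraph V) {M : Type*} [AddCommMonoid M]
    (f : V → Set V → M) :
    ∑ Q ∈ univ.image (mComp m H), ∑ v ∈ Q.toFinset, f v Q = ∑ v, f v (mComp m H v) := by
  rw [← sum_fiberwise_of_maps_to (g := mComp m H) fun v _ => mem_image_of_mem _ (mem_univ v)]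
  refine sum_congr rfl fun Q hQ => ?_
  obtain ⟨v, -, rfl⟩ := mem_image.1 hQ
  have : (mComp m H v).toFinset = univ.filter fun w => mComp m H w = mComp m H v := by
    ext w
    simp [mComp_eq_mComp_iff]
  rw [this]
  exact sum_congr rfl fun w hw => by rw [(mem_filter.1 hw).2]

theorem two_mul_crossE (H : SimpleGraph V) :
    2 * crossE m H = ∑ v, (H.neighborSet v \ mComp m H v).ncard := by
  have hcross : {e ∈ H.edgeSet | ∃ u ∈ e, ∃ w ∈ e, mComp m H u ≠ mComp m H w} =
      (H ⊓ (⊤ : SimpleGraph (Set V)).comap (mComp m H)).edgeSet := by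
    ext e
    induction e using Sym2.ind
    simp [eq_comm]
  rw [crossE, hcross, ← sum_ncard_neighborSet]
  refine sum_congr rfl fun v _ => congrArg _ (Set.ext fun w => ?_)
  simp [← mComp_eq_mComp_iff, eq_comm]

theorem cutE_le_sum_ncard_neighborSet_diff (G : SimpleGraph V) (X : Set V) :
    cutE G X ≤ ∑ v ∈ X.toFinset, (G.neighborSet v \ X).ncard := by
  let P : Finset (Σ _ : V, V) := X.toFinset.sigma fun v => (G.neighborSet v \ X).toFinset
  calc cutE G X ≤ #(P.image fun p => s(p.1, p.2)) := by
        rw [cutE, ← Set.ncard_coe_finset]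
        refine Set.ncard_le_ncard ?_ (Finset.finite_toSet _)
        rintro e ⟨he, u, hu, w, hw, huX, hwX⟩
        obtain rfl := (Sym2.mem_and_mem_iff (ne_of_mem_of_not_mem huX hwX)).1 ⟨hu, hw⟩
        simpa [P] using ⟨u, w, ⟨huX, he, hwX⟩, .inl ⟨rfl, rfl⟩⟩
    _ ≤ #P := card_image_le
    _ = _ := by simp [P, Set.ncard_eq_toFinset_card']

theorem mul_card_sub_ncard_edgeSet_le_Omega (H : SimpleGraph V) :
    (m * Nat.card V : ℤ) - H.edgeSet.ncard ≤ Omega m H := by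
  set P := univ.image (mComp m H)
  have hsize : ∑ Q ∈ P, Q.ncard = Nat.card V := by
    rw [Nat.card_eq_fintype_card, ← card_univ, card_eq_sum_ones,
      ← sum_image_mComp_sum_toFinset (m := m) H fun _ _ => 1]
    simp [P, Set.ncard_eq_toFinset_card']
  have hedges : ∑ Q ∈ P, (H.induce Q).edgeSet.ncard + crossE m H = H.edgeSet.ncard := by
    suffices 2 * (∑ Q ∈ P, (H.induce Q).edgeSet.ncard + crossE m H) = 2 * H.edgeSet.ncard by
      omega
    rw [mul_add, mul_sum, two_mul_crossE, ← sum_ncard_neighborSet]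
    simp_rw [two_mul_ncard_edgeSet_induce]
    rw [sum_image_mComp_sum_toFinset H fun v Q => (H.neighborSet v ∩ Q).ncard,
      ← sum_add_distrib]
    exact sum_congr rfl fun v _ => Set.ncard_inter_add_ncard_sdiff_eq_ncard _ _
  have htrees : ∀ Q ∈ P, m * Q.ncard ≤ (H.induce Q).edgeSet.ncard + m := by
    intro Q hQ
    obtain ⟨v, -, rfl⟩ := mem_image.1 hQ
    simpa only [Nat.card_coe_set_eq] using
      (isTreeConn_induce_mComp (m := m) (H := H) v).mul_card_le_ncard_edgeSet_add
  have : m * Nat.card V + crossE m H ≤ H.edgeSet.ncard + m * #P :=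
    calc m * Nat.card V + crossE m H
        ≤ ∑ Q ∈ P, ((H.induce Q).edgeSet.ncard + m) + crossE m H := by
          rw [← hsize, mul_sum]
          gcongr with Q hQ
          exact htrees Q hQ
      _ = H.edgeSet.ncard + m * #P := by
          rw [sum_add_distrib, ← hedges, sum_const, smul_eq_mul]
          ring
  have hP : (Set.range (mComp m H)).ncard = #P := ncard_range_mComp H
  rw [Omega, hP]
  omega

theorem mul_ncard_range_mComp_induce_compl_le {k : ℕ} {G : SimpleGraph V} (hconn : EdgeConn k G)
    {S : Finset V} (hS : S.Nonempty) :
    k * (Set.range (mComp m (G.induce (↑S : Set V)ᶜ))).ncard ≤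
      2 * crossE m (G.induce (↑S : Set V)ᶜ) + ∑ v ∈ S, (G.neighborSet v \ S).ncard := by
  set H := G.induce (↑S : Set V)ᶜ
  set P := univ.image (mComp m H)
  have hpart :
      ∀ Q ∈ P, k ≤ ∑ v ∈ Q.toFinset, (G.neighborSet v \ Subtype.val '' Q).ncard := by
    intro Q hQ
    obtain ⟨v, -, rfl⟩ := mem_image.1 hQ
    obtain ⟨s, hs⟩ := hS
    refine (hconn (Subtype.val '' mComp m H v) ⟨v, v, mem_mComp_self v, rfl⟩ ⟨s, ?_⟩).trans
      ((cutE_le_sum_ncard_neighborSet_diff _ _).trans_eq ?_)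
    · rintro ⟨x, -, rfl⟩
      exact x.2 hs
    · rw [Set.toFinset_image, sum_image Subtype.val_injective.injOn]
  have hvertex (v : ↥(↑S : Set V)ᶜ) : (G.neighborSet v \ Subtype.val '' mComp m H v).ncard ≤
      (G.neighborSet v ∩ S).ncard + (H.neighborSet v \ mComp m H v).ncard := by
    calc (G.neighborSet v \ Subtype.val '' mComp m H v).ncard
        ≤ (G.neighborSet v ∩ S ∪ Subtype.val '' (H.neighborSet v \ mComp m H v)).ncard :=
          Set.ncard_le_ncard ?_
      _ ≤ _ := by
          grw [Set.ncard_union_le, Set.ncard_image_of_injective _ Subtype.val_injective]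
    rintro w ⟨hw, hwQ⟩
    by_cases hwS : w ∈ S
    · exact .inl ⟨hw, hwS⟩
    · exact .inr ⟨⟨w, hwS⟩, ⟨hw, fun h => hwQ ⟨_, h, rfl⟩⟩, rfl⟩
  rw [ncard_range_mComp, ← sum_compl_ncard_neighborSet_inter, two_mul_crossE, add_comm,
    mul_comm, ← smul_eq_mul, ← sum_const]
  calc ∑ _ ∈ P, k
      ≤ ∑ Q ∈ P, ∑ v ∈ Q.toFinset, (G.neighborSet v \ Subtype.val '' Q).ncard :=
        sum_le_sum hpart
    _ = ∑ v : ↥(↑S : Set V)ᶜ, (G.neighborSet v \ Subtype.val '' mComp m H v).ncard :=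
        sum_image_mComp_sum_toFinset H fun v Q => (G.neighborSet v \ Subtype.val '' Q).ncard
    _ ≤ ∑ v : ↥(↑S : Set V)ᶜ,
          ((G.neighborSet v ∩ S).ncard + (H.neighborSet v \ mComp m H v).ncard) :=
        sum_le_sum fun v _ => hvertex v
    _ = ∑ v ∈ Sᶜ, (G.neighborSet v ∩ S).ncard +
          ∑ v, (H.neighborSet v \ mComp m H v).ncard := by
        rw [sum_add_distrib, sum_subtype Sᶜ (p := (· ∈ (↑S : Set V)ᶜ)) (by simp)]

end Counting

theorem mul_Omega_induce_compl_le {V : Type*} [Fintype V] {m k : ℕ} (hk : 2 * m ≤ k)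
    {G : SimpleGraph V} (hconn : EdgeConn k G) {S : Finset V} (hS : S.Nonempty) :
    k * Omega m (G.induce (↑S : Set V)ᶜ) ≤
      ∑ v ∈ S, (m : ℤ) * ((G.neighborSet v).ncard - 2 * m) +
        2 * m * Omega m (G.induce (↑S : Set V)) := by
  have hcomp := mul_ncard_range_mComp_induce_compl_le (m := m) hconn hS
  have hdeg := G.sum_ncard_neighborSet_eq_induce_add S
  have hΩ := mul_card_sub_ncard_edgeSet_le_Omega (m := m) (G.induce (↑S : Set V))
  rw [Nat.card_coe_set_eq, Set.ncard_coe_finset] at hΩ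
  have hsum : ∑ v ∈ S, (m : ℤ) * ((G.neighborSet v).ncard - 2 * m) =
      m * (∑ v ∈ S, (G.neighborSet v).ncard : ℕ) - 2 * m * (m * #S) := by
    simp only [mul_sub, sum_sub_distrib, ← mul_sum, sum_const, nsmul_eq_mul, Nat.cast_sum]
    ring
  rw [hsum, hdeg, Omega]
  set x := crossE m (G.induce (↑S : Set V)ᶜ)
  -- under a name, `push_cast` cannot rewrite the vertex type `↥↑S` inside this term
  set E := (G.induce (↑S : Set V)).edgeSet.ncard
  zify at hk hcomp
  push_cast
  linarith [mul_le_mul_of_nonneg_left hcomp (Int.natCast_nonneg m),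
    mul_le_mul_of_nonneg_left hΩ (Int.natCast_nonneg m),
    mul_nonneg (sub_nonneg.2 hk) (Int.natCast_nonneg x)]

theorem stmt16_general {V : Type*} [Fintype V] (m k : ℕ) (hk : 2 * m ≤ k)
    (G : SimpleGraph V) (hconn : EdgeConn k G) (S : Finset V) (hS : S.Nonempty) :
    (Omega m (G.induce ((↑S : Set V)ᶜ)) : ℚ) ≤
      (∑ v ∈ S, (m : ℚ) * (((G.neighborSet v).ncard : ℚ) - 2 * m) / k) +
        (2 * m : ℚ) / k * (Omega m (G.induce (↑S : Set V)) : ℚ) := by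
  obtain rfl | hk0 := k.eq_zero_or_pos
  · obtain rfl : m = 0 := by omega
    -- the right side is `0`, through division by `k = 0`, and `Omega 0 _ = -crossE 0 _`
    simp [Omega]
  have key : ((k * Omega m (G.induce (↑S : Set V)ᶜ) : ℤ) : ℚ) ≤
      ((∑ v ∈ S, (m : ℤ) * ((G.neighborSet v).ncard - 2 * m) +
        2 * m * Omega m (G.induce (↑S : Set V)) : ℤ) : ℚ) :=
    Int.cast_le.2 (mul_Omega_induce_compl_le hk hconn hS)
  push_cast at key
  rw [← sum_div, div_mul_eq_mul_div, ← add_div, le_div_iff₀ (by positivity)]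
  linarith

theorem stmt16 {V : Type*} [Fintype V] (m k : ℕ) (hm : 0 < m) (hk : 2 * m ≤ k)
    (G : SimpleGraph V) (hconn : EdgeConn k G) (S : Finset V) (hS : S.Nonempty) :
    (Omega m (G.induce ((↑S : Set V)ᶜ)) : ℚ) ≤
      (∑ v ∈ S, (m : ℚ) * (((G.neighborSet v).ncard : ℚ) - 2 * m) / k) +
        (2 * m : ℚ) / k * (Omega m (G.induce (↑S : Set V)) : ℚ) :=
  stmt16_general m k hk G hconn S hS
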